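/- arXiv:1703.10741 — 9 statements merged into one kernel-verified Lean document; each statement's English description precedes it below -/
import Mathlib

section
/- For any r ≥ 3 and k ≥ 1, let G be a graph on n vertices with minimum degree δ(G) ≥ ⌊n/2⌋ + k. Then every set A ⊆ V(G) with |A| ≥ ⌈n/2⌉ + (r - k - 1) percolates in r-neighbour bootstrap percolation, i.e. ⟨A⟩_r = V(G). -/
open Finset

open scoped Classical

noncomputable section

variable {V : Type*}

/-- Number of neighbours of `v` inside the set `A`. -/
def nbrsIn (G : SimpleGraph V) (A : Finset V) (v : V) : ℕ :=
  (A.filter (fun u => G.Adj v u)).card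

/-- One step of the `r`-neighbour bootstrap process. -/
def bootStep [Fintype V] (G : SimpleGraph V) (r : ℕ) (A : Finset V) : Finset V :=
  A ∪ Finset.univ.filter (fun v => r ≤ nbrsIn G A v)

/-- The sets `A_t` of the `r`-neighbour bootstrap process started at `A`. -/
def bootSeq [Fintype V] (G : SimpleGraph V) (r : ℕ) (A : Finset V) : ℕ → Finset V
  | 0 => A
  | t + 1 => bootStep G r (bootSeq G r A t)

/-- `A` is closed under the `r`-neighbour bootstrap rule. -/
def BootClosed (G : SimpleGraph V) (r : ℕ) (A : Finset V) : Prop :=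
  ∀ v, r ≤ nbrsIn G A v → v ∈ A

/-- The `r`-neighbour bootstrap closure `⟨A⟩_r`: the smallest closed superset of `A`. -/
def bootClosure [Fintype V] (G : SimpleGraph V) (r : ℕ) (A : Finset V) : Finset V :=
  Finset.univ.filter (fun v => ∀ B : Finset V, A ⊆ B → BootClosed G r B → v ∈ B)

/-- `m(G, r)`: the minimum size of a percolating set. -/
def minPerc [Fintype V] (G : SimpleGraph V) (r : ℕ) : ℕ :=
  sInf {k | ∃ A : Finset V, A.card = k ∧ bootClosure G r A = Finset.univ}

end

lemma subset_bootClosure' {V : Type*} [Fintype V] (G : SimpleGraph V) (r : ℕ) (A : Finset V) :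
    A ⊆ bootClosure G r A := by
  intro v hv
  simp only [bootClosure, mem_filter, mem_univ, true_and]
  exact fun B hAB _ => hAB hv

lemma nbrsIn_mono' {V : Type*} (G : SimpleGraph V) {A B : Finset V} (h : A ⊆ B) (v : V) :
    nbrsIn G A v ≤ nbrsIn G B v :=
  Finset.card_le_card (Finset.filter_subset_filter _ h)

lemma bootClosed_bootClosure' {V : Type*} [Fintype V] (G : SimpleGraph V) (r : ℕ) (A : Finset V) :
    BootClosed G r (bootClosure G r A) := by
  intro v hv
  simp only [bootClosure, mem_filter, mem_univ, true_and]
  intro B hAB hB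
  apply hB
  refine le_trans hv (nbrsIn_mono' G ?_ v)
  intro u hu
  simp only [bootClosure, mem_filter, mem_univ, true_and] at hu
  exact hu B hAB hB

theorem stmt_1 {V : Type*} [Fintype V] (G : SimpleGraph V) (r k n : ℕ)
    (hr : 3 ≤ r) (hk : 1 ≤ k) (hn : Fintype.card V = n)
    (hδ : n / 2 + k ≤ G.minDegree)
    (A : Finset V) (hA : ((n + 1) / 2 : ℤ) + ((r : ℤ) - k - 1) ≤ (A.card : ℤ)) :
    bootClosure G r A = Finset.univ := by
  classical
  set B := bootClosure G r A with hB
  by_contra hne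
  obtain ⟨v, hv⟩ : ∃ v, v ∉ B := by
    by_contra h
    push_neg at h
    exact hne (Finset.eq_univ_iff_forall.2 h)
  set C : Finset V := Finset.univ \ B with hC
  have hvC : v ∈ C := by simp [hC, hv]
  -- not enough infected neighbours
  have h1 : nbrsIn G B v < r := by
    by_contra h
    push_neg at h
    exact hv (bootClosed_bootClosure' G r A v h)
  -- degree splits
  have hsplit : G.degree v = nbrsIn G B v + nbrsIn G C v := by
    have hdisj : Disjoint (B.filter (fun u => G.Adj v u)) (C.filter (fun u => G.Adj v u)) :=
      Finset.disjoint_filter_filter Finset.disjoint_sdiff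
    have hunion : B ∪ C = Finset.univ := Finset.union_sdiff_of_subset (Finset.subset_univ B)
    have : nbrsIn G (B ∪ C) v = nbrsIn G B v + nbrsIn G C v := by
      simp only [nbrsIn, Finset.filter_union]
      exact Finset.card_union_of_disjoint hdisj
    rw [hunion] at this
    rw [← this]
    simp only [nbrsIn]
    rw [SimpleGraph.degree]
    congr 1
    ext u
    simp [SimpleGraph.mem_neighborFinset]
  have h2 : n / 2 + k ≤ G.degree v := le_trans hδ (G.minDegree_le_degree v)
  have h4 : nbrsIn G C v ≤ C.card - 1 := by
    have hsub : C.filter (fun u => G.Adj v u) ⊆ C.erase v := by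
      intro u hu
      rw [Finset.mem_filter] at hu
      exact Finset.mem_erase.2 ⟨fun h => G.irrefl (h ▸ hu.2), hu.1⟩
    calc nbrsIn G C v ≤ (C.erase v).card := Finset.card_le_card hsub
      _ = C.card - 1 := Finset.card_erase_of_mem hvC
  have h4' : 1 ≤ C.card := Finset.card_pos.2 ⟨v, hvC⟩
  have h5 : C.card = n - B.card := by
    rw [hC, Finset.card_sdiff_of_subset (Finset.subset_univ B), Finset.card_univ, hn]
  have h5' : B.card ≤ n := by rw [← hn, ← Finset.card_univ]; exact Finset.card_le_card (Finset.subset_univ B)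
  have h6 : A.card ≤ B.card := Finset.card_le_card (subset_bootClosure' G r A)
  omega
end

section
/- Let r ≥ 3, k ≥ 0, and n ≥ k(r+1) - 1. If G is a graph on n vertices with minimum degree δ(G) ≥ n - k, then every set A of r vertices percolates in r-neighbour bootstrap percolation: ⟨A⟩_r = V(G). -/
open Finset

open scoped Classical

theorem stmt_2 {V : Type*} [Fintype V] (G : SimpleGraph V) (r k n : ℕ)
    (hr : 3 ≤ r) (hn : Fintype.card V = n)
    (hsize : (k : ℤ) * ((r : ℤ) + 1) - 1 ≤ (n : ℤ))
    (hδ : (n : ℤ) - (k : ℤ) ≤ (G.minDegree : ℤ))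
    (A : Finset V) (hA : A.card = r) :
    bootClosure G r A = Finset.univ := by
  classical
  set B := bootClosure G r A with hBdef
  -- basic closure facts
  have hAB : A ⊆ B := by
    intro a ha
    simp only [hBdef, bootClosure, mem_filter, mem_univ, true_and]
    exact fun C hAC _ => hAC ha
  have hmin : ∀ C : Finset V, A ⊆ C → BootClosed G r C → B ⊆ C := by
    intro C hAC hC b hb
    simp only [hBdef, bootClosure, mem_filter, mem_univ, true_and] at hb
    exact hb C hAC hC
  have hclosed : BootClosed G r B := by
    intro v hv
    simp only [hBdef, bootClosure, mem_filter, mem_univ, true_and]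
    intro C hAC hC
    apply hC v
    exact le_trans hv (Finset.card_le_card (Finset.filter_subset_filter _ (hmin C hAC hC)))
  by_contra hne
  obtain ⟨v, hvB⟩ : ∃ v, v ∉ B := by
    by_contra h; push_neg at h; exact hne (Finset.eq_univ_iff_forall.mpr h)
  set C : Finset V := Finset.univ \ B with hCdef
  have hvC : v ∈ C := by simp [hCdef, hvB]
  have hbc : C.card + B.card = n := by
    rw [Finset.card_sdiff_add_card_eq_card (Finset.subset_univ B), Finset.card_univ, hn]
  -- F1 : every vertex outside B has at most r-1 neighbours in B
  have F1 : ∀ w ∈ C, nbrsIn G B w + 1 ≤ r := by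
    intro w hw
    have hwB : w ∉ B := (Finset.mem_sdiff.mp hw).2
    have : ¬ r ≤ nbrsIn G B w := fun h => hwB (hclosed w h)
    omega
  -- F2 : nbrsIn B + nbrsIn C = degree
  have F2 : ∀ u : V, nbrsIn G B u + nbrsIn G C u = G.degree u := by
    intro u
    have hdisj : Disjoint B C := by
      simp [hCdef, Finset.disjoint_sdiff]
    have hunion : B ∪ C = Finset.univ := by
      simp [hCdef, Finset.union_sdiff_of_subset (Finset.subset_univ B)]
    have h1 : nbrsIn G B u + nbrsIn G C u = ((B ∪ C).filter (fun w => G.Adj u w)).card := by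
      rw [Finset.filter_union]
      rw [Finset.card_union_of_disjoint
        (Finset.disjoint_filter_filter hdisj)]
      rfl
    rw [h1, hunion]
    have : Finset.univ.filter (fun w => G.Adj u w) = G.neighborFinset u := by
      ext w; simp [SimpleGraph.mem_neighborFinset]
    rw [this, SimpleGraph.degree]
  -- F3 : a vertex of B has at most |B| - 1 neighbours in B
  have F3 : ∀ u ∈ B, nbrsIn G B u + 1 ≤ B.card := by
    intro u hu
    have hsub : B.filter (fun w => G.Adj u w) ⊆ B.erase u := by
      intro w hw
      rcases Finset.mem_filter.mp hw with ⟨hwB, hadj⟩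
      refine Finset.mem_erase.mpr ⟨?_, hwB⟩
      rintro rfl; exact G.irrefl hadj
    have h := Finset.card_le_card hsub
    rw [Finset.card_erase_of_mem hu] at h
    have hpos : 1 ≤ B.card := Finset.card_pos.mpr ⟨u, hu⟩
    simp only [nbrsIn]
    omega
  -- F4 : |B| ≤ (r-1) + (k-1)
  have F4 : (B.card : ℤ) ≤ ((r : ℤ) - 1) + ((k : ℤ) - 1) := by
    have hsplit : nbrsIn G B v + (B.filter (fun u => ¬ G.Adj v u)).card = B.card := by
      exact Finset.card_filter_add_card_filter_not _
    set N := B.filter (fun u => ¬ G.Adj v u) with hN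
    have hNsub : N ⊆ Finset.univ \ insert v (G.neighborFinset v) := by
      intro u hu
      rcases Finset.mem_filter.mp hu with ⟨huB, hnadj⟩
      refine Finset.mem_sdiff.mpr ⟨Finset.mem_univ _, ?_⟩
      intro hmem
      rcases Finset.mem_insert.mp hmem with rfl | h
      · exact hvB huB
      · exact hnadj (by simpa using h)
    have hcard : (Finset.univ \ insert v (G.neighborFinset v)).card
        = n - (G.degree v + 1) := by
      rw [Finset.card_sdiff_of_subset (Finset.subset_univ _), Finset.card_univ, hn,
        Finset.card_insert_of_notMem (by simp), SimpleGraph.card_neighborFinset_eq_degree]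
    have hle : N.card ≤ n - (G.degree v + 1) := hcard ▸ Finset.card_le_card hNsub
    have hdn : G.degree v + 1 ≤ n := by
      have : insert v (G.neighborFinset v) ⊆ Finset.univ := Finset.subset_univ _
      have := Finset.card_le_card this
      rw [Finset.card_insert_of_notMem (by simp),
        SimpleGraph.card_neighborFinset_eq_degree, Finset.card_univ, hn] at this
      exact this
    have hmd : (G.minDegree : ℤ) ≤ (G.degree v : ℤ) := by
      exact_mod_cast G.minDegree_le_degree v
    have h1 := F1 v hvC
    have hNk : (N.card : ℤ) ≤ (k : ℤ) - 1 := by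
      have : (N.card : ℤ) ≤ (n : ℤ) - ((G.degree v : ℤ) + 1) := by
        have := hle
        omega
      linarith
    have h1' : (nbrsIn G B v : ℤ) + 1 ≤ (r : ℤ) := by exact_mod_cast h1
    have hsplit' : (nbrsIn G B v : ℤ) + (N.card : ℤ) = (B.card : ℤ) := by
      exact_mod_cast hsplit
    linarith
  -- double counting edges between B and C
  have Ecount : (∑ u ∈ B, (nbrsIn G C u : ℤ)) = ∑ w ∈ C, (nbrsIn G B w : ℤ) := by
    have : (∑ u ∈ B, nbrsIn G C u) = ∑ w ∈ C, nbrsIn G B w := by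
      simp only [nbrsIn, Finset.card_filter]
      rw [Finset.sum_comm]
      refine Finset.sum_congr rfl fun w _ => Finset.sum_congr rfl fun u _ => ?_
      simp [G.adj_comm]
    exact_mod_cast this
  have hbB : (r : ℤ) ≤ (B.card : ℤ) := by
    have := Finset.card_le_card hAB
    rw [hA] at this
    exact_mod_cast this
  have hcC : (1 : ℤ) ≤ (C.card : ℤ) := by
    have : 0 < C.card := Finset.card_pos.mpr ⟨v, hvC⟩
    exact_mod_cast this
  have hbcZ : (C.card : ℤ) + (B.card : ℤ) = (n : ℤ) := by exact_mod_cast hbc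
  -- lower bound on the edge count
  have lower : (B.card : ℤ) * ((C.card : ℤ) - (k : ℤ) + 1) ≤ ∑ u ∈ B, (nbrsIn G C u : ℤ) := by
    have : ∀ u ∈ B, ((C.card : ℤ) - (k : ℤ) + 1) ≤ (nbrsIn G C u : ℤ) := by
      intro u hu
      have h2 : (nbrsIn G B u : ℤ) + (nbrsIn G C u : ℤ) = (G.degree u : ℤ) := by
        exact_mod_cast F2 u
      have h3 : (nbrsIn G B u : ℤ) + 1 ≤ (B.card : ℤ) := by exact_mod_cast F3 u hu
      have hmd : (G.minDegree : ℤ) ≤ (G.degree u : ℤ) := by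
        exact_mod_cast G.minDegree_le_degree u
      linarith
    calc (B.card : ℤ) * ((C.card : ℤ) - (k : ℤ) + 1)
        = ∑ _u ∈ B, ((C.card : ℤ) - (k : ℤ) + 1) := by
          rw [Finset.sum_const, nsmul_eq_mul]
      _ ≤ ∑ u ∈ B, (nbrsIn G C u : ℤ) := Finset.sum_le_sum this
  -- upper bound on the edge count
  have upper : (∑ w ∈ C, (nbrsIn G B w : ℤ)) ≤ (C.card : ℤ) * ((r : ℤ) - 1) := by
    calc (∑ w ∈ C, (nbrsIn G B w : ℤ))
        ≤ ∑ _w ∈ C, ((r : ℤ) - 1) := by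
          refine Finset.sum_le_sum fun w hw => ?_
          have := F1 w hw
          have : (nbrsIn G B w : ℤ) + 1 ≤ (r : ℤ) := by exact_mod_cast this
          linarith
      _ = (C.card : ℤ) * ((r : ℤ) - 1) := by rw [Finset.sum_const, nsmul_eq_mul]
  have hedge : (B.card : ℤ) * ((C.card : ℤ) - (k : ℤ) + 1) ≤ (C.card : ℤ) * ((r : ℤ) - 1) := by
    calc (B.card : ℤ) * ((C.card : ℤ) - (k : ℤ) + 1) ≤ ∑ u ∈ B, (nbrsIn G C u : ℤ) := lower
      _ = ∑ w ∈ C, (nbrsIn G B w : ℤ) := Ecount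
      _ ≤ (C.card : ℤ) * ((r : ℤ) - 1) := upper
  set b : ℤ := (B.card : ℤ)
  set c : ℤ := (C.card : ℤ)
  have hrZ : (3 : ℤ) ≤ (r : ℤ) := by exact_mod_cast hr
  have hkZ : (0 : ℤ) ≤ (k : ℤ) := by positivity
  rcases Nat.eq_zero_or_pos k with hk0 | hk1
  · subst hk0
    push_cast at hedge F4 hbcZ hsize
    nlinarith [mul_nonneg (sub_nonneg.mpr hbB) (by linarith : (0:ℤ) ≤ c + 1)]
  · have hk1Z : (1 : ℤ) ≤ (k : ℤ) := by exact_mod_cast hk1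
    have hclb : (k : ℤ) * (r : ℤ) - (r : ℤ) + 1 ≤ c := by nlinarith
    have hd : (0 : ℤ) ≤ c - (k : ℤ) + 1 := by
      nlinarith [mul_nonneg (by linarith : (0:ℤ) ≤ (r:ℤ) - 1) (by linarith : (0:ℤ) ≤ (k:ℤ) - 1)]
    nlinarith [mul_nonneg (sub_nonneg.mpr hbB) hd]
end

section
/- Let r ≥ 3, set k = max{1, r-3}, and let G be a graph on n ≥ 10r vertices with δ(G) ≥ ⌊n/2⌋ + k. If A ⊆ V(G) satisfies ⟨A⟩_r = A (A is closed under r-neighbour bootstrap percolation), then either |A| ≤ 2(r-1) or |A| ≥ ⌊n/2⌋ - min{1, r-3}. -/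
open Finset

open scoped Classical

theorem stmt_3 {V : Type*} [Fintype V] (G : SimpleGraph V) (r n : ℕ)
    (hr : 3 ≤ r) (hn : Fintype.card V = n) (hbig : 10 * r ≤ n)
    (hδ : n / 2 + max 1 (r - 3) ≤ G.minDegree)
    (A : Finset V) (hA : bootClosure G r A = A) :
    A.card ≤ 2 * (r - 1) ∨ n / 2 - min 1 (r - 3) ≤ A.card := by
  classical
  by_contra hcon
  push_neg at hcon
  obtain ⟨hc1, hc2⟩ := hcon
  -- A is closed under the bootstrap rule
  have hclosed : BootClosed G r A := by
    intro v hv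
    have hsub : ∀ B : Finset V, A ⊆ B → BootClosed G r B → bootClosure G r A ⊆ B := by
      intro B hAB hB x hx
      simp only [bootClosure, mem_filter, mem_univ, true_and] at hx
      exact hx B hAB hB
    rw [← hA]
    simp only [bootClosure, mem_filter, mem_univ, true_and]
    intro B hAB hB
    apply hB v
    refine le_trans hv ?_
    have hAB' : A ⊆ B := hA ▸ hsub B hAB hB
    exact Finset.card_le_card (Finset.filter_subset_filter _ hAB')
  set a := A.card with ha
  have haN : a ≤ n := hn ▸ Finset.card_le_univ A
  -- upper bound on edges between A and its complement
  have hEub : ∑ v ∈ Aᶜ, nbrsIn G A v ≤ (n - a) * (r - 1) := by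
    have hb : ∀ v ∈ Aᶜ, nbrsIn G A v ≤ r - 1 := by
      intro v hv
      have hvA : v ∉ A := by simpa using hv
      by_contra hlt
      push_neg at hlt
      exact hvA (hclosed v (by omega))
    calc ∑ v ∈ Aᶜ, nbrsIn G A v ≤ ∑ _v ∈ Aᶜ, (r - 1) := Finset.sum_le_sum hb
      _ = (n - a) * (r - 1) := by
          rw [Finset.sum_const, smul_eq_mul, Finset.card_compl, hn]
  -- double counting
  have hswap : ∑ v ∈ Aᶜ, nbrsIn G A v
      = ∑ u ∈ A, (Aᶜ.filter (fun v => G.Adj v u)).card := by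
    simp only [nbrsIn, Finset.card_filter]
    exact Finset.sum_comm
  -- per-vertex lower bound
  have hdeg : ∀ u ∈ A,
      n / 2 + max 1 (r - 3) + 1 ≤ a + (Aᶜ.filter (fun v => G.Adj v u)).card := by
    intro u hu
    have h1 : n / 2 + max 1 (r - 3) ≤ G.degree u :=
      le_trans hδ (G.minDegree_le_degree u)
    have hpred : ∀ s : Finset V,
        s.filter (fun v => G.Adj v u) = s.filter (fun v => G.Adj u v) := by
      intro s
      apply Finset.filter_congr
      intro v _
      constructor <;> intro h <;> exact h.symm
    have h2 : G.degree u = (A.filter (fun v => G.Adj u v)).card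
        + (Aᶜ.filter (fun v => G.Adj u v)).card := by
      rw [SimpleGraph.degree, SimpleGraph.neighborFinset_eq_filter,
        ← Finset.card_union_of_disjoint
          (Finset.disjoint_filter_filter disjoint_compl_right),
        ← Finset.filter_union, Finset.union_compl]
    have h3 : (A.filter (fun v => G.Adj u v)).card ≤ a - 1 := by
      have hsub : A.filter (fun v => G.Adj u v) ⊆ A.erase u := by
        intro v hv
        simp only [Finset.mem_filter] at hv
        exact Finset.mem_erase.2 ⟨(G.ne_of_adj hv.2).symm, hv.1⟩
      calc (A.filter (fun v => G.Adj u v)).card ≤ (A.erase u).card :=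
            Finset.card_le_card hsub
        _ = a - 1 := by rw [Finset.card_erase_of_mem hu]
    have h4 : 1 ≤ a := Finset.card_pos.2 ⟨u, hu⟩
    rw [hpred]
    omega
  have hsum : a * (n / 2 + max 1 (r - 3) + 1)
      ≤ a * a + ∑ u ∈ A, (Aᶜ.filter (fun v => G.Adj v u)).card := by
    calc a * (n / 2 + max 1 (r - 3) + 1)
        = ∑ _u ∈ A, (n / 2 + max 1 (r - 3) + 1) := by
          rw [Finset.sum_const, smul_eq_mul]
      _ ≤ ∑ u ∈ A, (a + (Aᶜ.filter (fun v => G.Adj v u)).card) :=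
          Finset.sum_le_sum hdeg
      _ = a * a + ∑ u ∈ A, (Aᶜ.filter (fun v => G.Adj v u)).card := by
          rw [Finset.sum_add_distrib, Finset.sum_const, smul_eq_mul]
  have key : a * (n / 2 + max 1 (r - 3) + 1) ≤ a * a + (n - a) * (r - 1) :=
    le_trans hsum (Nat.add_le_add_left (hswap ▸ hEub) _)
  -- arithmetic contradiction
  have hh5 : 5 * r ≤ n / 2 := by omega
  have hn2 : n ≤ 2 * (n / 2) + 1 := by omega
  by_cases h3 : r = 3
  · subst h3
    norm_num at key hc2 hc1
    have key' : (a : ℤ) * ((n / 2 : ℕ) + 1 + 1) ≤ a * a + ((n : ℤ) - a) * 2 := by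
      zify [haN] at key
      exact key
    have h5a : (5 : ℤ) ≤ a := by exact_mod_cast (by omega : 5 ≤ a)
    have hah : (a : ℤ) ≤ ((n / 2 : ℕ) : ℤ) - 1 := by
      have h' : a + 1 ≤ n / 2 := by omega
      have h'' : (a : ℤ) + 1 ≤ ((n / 2 : ℕ) : ℤ) := by exact_mod_cast h'
      omega
    have hH : (15 : ℤ) ≤ ((n / 2 : ℕ) : ℤ) := by exact_mod_cast (by omega : 15 ≤ n / 2)
    have hnZ : (n : ℤ) ≤ 2 * ((n / 2 : ℕ) : ℤ) + 1 := by exact_mod_cast hn2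
    nlinarith [mul_nonneg (by linarith : (0:ℤ) ≤ (a : ℤ) - 5)
      (by linarith : (0:ℤ) ≤ ((n / 2 : ℕ) : ℤ) - 1 - a)]
  · have h4 : 4 ≤ r := by omega
    have hk : max 1 (r - 3) = r - 3 := by omega
    have hm : min 1 (r - 3) = 1 := by omega
    rw [hk] at key
    rw [hm] at hc2
    have key' : (a : ℤ) * (((n / 2 : ℕ) : ℤ) + ((r : ℤ) - 3) + 1)
        ≤ a * a + ((n : ℤ) - a) * ((r : ℤ) - 1) := by
      zify [haN, (by omega : 3 ≤ r), (by omega : 1 ≤ r)] at key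
      exact key
    have h5a : 2 * (r : ℤ) - 1 ≤ a := by
      have : 2 * r - 1 ≤ a := by omega
      push_cast
      omega
    have hah : (a : ℤ) ≤ ((n / 2 : ℕ) : ℤ) - 2 := by
      have : a + 2 ≤ n / 2 := by omega
      have := (by exact_mod_cast this : (a : ℤ) + 2 ≤ ((n / 2 : ℕ) : ℤ))
      omega
    have hH : 5 * (r : ℤ) ≤ ((n / 2 : ℕ) : ℤ) := by exact_mod_cast hh5
    have hnZ : (n : ℤ) ≤ 2 * ((n / 2 : ℕ) : ℤ) + 1 := by exact_mod_cast hn2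
    have hrZ : (4 : ℤ) ≤ r := by exact_mod_cast h4
    have haZ : (a : ℤ) ≤ n := by exact_mod_cast haN
    have hP : (0:ℤ) ≤ ((a : ℤ) - (2 * r - 1)) * (((n / 2 : ℕ) : ℤ) - 2 - a) :=
      mul_nonneg (by linarith) (by linarith)
    have hQ : (0:ℤ) ≤ ((r : ℤ) - 1) * (2 * ((n / 2 : ℕ) : ℤ) + 1 - n) :=
      mul_nonneg (by linarith) (by linarith)
    linarith [hP, hQ, key', hH, hrZ]
end

section
/- Let G be a graph and A ⊆ V(G) a set closed under r-neighbour bootstrap percolation with |A| = ℓ. Then ℓ(δ(G) - ℓ + 1) ≤ e(A, A^c) ≤ (r-1)(n - ℓ), where n = |V(G)| and e(A, A^c) is the number of edges between A and its complement. -/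
open Finset

open scoped Classical

/-! Count the edges between `A` and `Aᶜ` from each side: a vertex of `A` has at most `ℓ - 1`
neighbours in `A`, hence at least `δ(G) - ℓ + 1` in `Aᶜ`; a vertex of `Aᶜ` has at most `r - 1`
neighbours in `A` because `A` is closed. -/

section

variable {V : Type*}

theorem nbrsIn_add_one_le_card (G : SimpleGraph V) {A : Finset V} {v : V} (hv : v ∈ A) :
    nbrsIn G A v + 1 ≤ #A := by
  have hsub : A.filter (G.Adj v) ⊆ A.erase v := fun u hu =>
    mem_erase.2 ⟨(G.ne_of_adj (mem_filter.1 hu).2).symm, (mem_filter.1 hu).1⟩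
  calc nbrsIn G A v + 1 ≤ #(A.erase v) + 1 := by gcongr; exact card_le_card hsub
    _ = #A := card_erase_add_one hv

theorem sum_nbrsIn_comm (G : SimpleGraph V) (A B : Finset V) :
    ∑ x ∈ A, nbrsIn G B x = ∑ y ∈ B, nbrsIn G A y := by
  refine (sum_card_bipartiteAbove_eq_sum_card_bipartiteBelow G.Adj).trans
    (sum_congr rfl fun y _ => ?_)
  simp only [bipartiteBelow, nbrsIn, G.adj_comm _ y]

theorem BootClosed.nbrsIn_lt {G : SimpleGraph V} {r : ℕ} {A : Finset V} (hA : BootClosed G r A)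
    {v : V} (hv : v ∉ A) : nbrsIn G A v < r :=
  lt_of_not_ge fun h => hv (hA v h)

variable [Fintype V]

theorem nbrsIn_add_nbrsIn_compl (G : SimpleGraph V) (A : Finset V) (v : V) :
    nbrsIn G A v + nbrsIn G Aᶜ v = G.degree v := by
  rw [nbrsIn, nbrsIn, ← card_union_of_disjoint (disjoint_filter_filter disjoint_compl_right),
    ← filter_union, union_compl, SimpleGraph.degree, SimpleGraph.neighborFinset_eq_filter]

theorem card_mul_minDegree_sub_card_add_one_le (G : SimpleGraph V) (A : Finset V) :
    (#A : ℤ) * (G.minDegree - #A + 1) ≤ ∑ x ∈ A, (nbrsIn G Aᶜ x : ℤ) := by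
  rw [← nsmul_eq_mul]
  refine card_nsmul_le_sum _ _ _ fun x hx => ?_
  have hsplit := nbrsIn_add_nbrsIn_compl G A x
  have hin := nbrsIn_add_one_le_card G hx
  have hmin := G.minDegree_le_degree x
  omega

theorem BootClosed.sum_nbrsIn_compl_le {G : SimpleGraph V} {r : ℕ} {A : Finset V}
    (hA : BootClosed G r A) :
    ∑ x ∈ A, (nbrsIn G Aᶜ x : ℤ) ≤ (r - 1) * (Fintype.card V - #A) := by
  rw [← Nat.cast_sum, sum_nbrsIn_comm, Nat.cast_sum, ← Nat.cast_sub (card_le_univ A),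
    ← card_compl, mul_comm, ← nsmul_eq_mul]
  refine sum_le_card_nsmul _ _ _ fun y hy => ?_
  have hlt := hA.nbrsIn_lt (mem_compl.1 hy)
  omega

end

theorem stmt_4 {V : Type*} [Fintype V] (G : SimpleGraph V) (r n ℓ : ℕ)
    (hn : Fintype.card V = n)
    (A : Finset V) (hclosed : BootClosed G r A) (hℓ : A.card = ℓ) :
    (ℓ : ℤ) * ((G.minDegree : ℤ) - (ℓ : ℤ) + 1) ≤ ∑ x ∈ A, (nbrsIn G Aᶜ x : ℤ) ∧
    ∑ x ∈ A, (nbrsIn G Aᶜ x : ℤ) ≤ ((r : ℤ) - 1) * ((n : ℤ) - (ℓ : ℤ)) := by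
  subst hn hℓ
  exact ⟨card_mul_minDegree_sub_card_add_one_le G A, hclosed.sum_nbrsIn_compl_le⟩
end

section
/- For n ≥ 6, if G is a graph on n vertices with minimum degree δ(G) ≥ ⌊n/2⌋ + 1, then every vertex of G is contained in a copy of the complete bipartite graph K_{2,3}. -/
open Finset

open scoped Classical

theorem stmt_5 {V : Type*} [Fintype V] (G : SimpleGraph V) (n : ℕ)
    (hn : Fintype.card V = n) (h6 : 6 ≤ n) (hδ : n / 2 + 1 ≤ G.minDegree) (x : V) :
    ∃ a b c d e : V, ({a, b, c, d, e} : Finset V).card = 5 ∧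
      x ∈ ({a, b, c, d, e} : Finset V) ∧
      G.Adj a c ∧ G.Adj a d ∧ G.Adj a e ∧ G.Adj b c ∧ G.Adj b d ∧ G.Adj b e := by
  have hnt : Nontrivial V := by
    rw [← Fintype.one_lt_card_iff_nontrivial, hn]; omega
  have hmod := Nat.div_add_mod n 2
  obtain ⟨b, hb, hS⟩ : ∃ b, b ≠ x ∧
      3 ≤ (G.neighborFinset x ∩ G.neighborFinset b).card := by
    by_cases hall : ∀ b, b ≠ x → G.Adj x b
    · obtain ⟨b, hb⟩ := exists_ne x
      refine ⟨b, hb, ?_⟩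
      have hsub : (G.neighborFinset b).erase x ⊆
          G.neighborFinset x ∩ G.neighborFinset b := by
        intro c hc
        obtain ⟨hcx, hcb⟩ := Finset.mem_erase.mp hc
        rw [SimpleGraph.mem_neighborFinset] at hcb
        exact Finset.mem_inter.mpr ⟨(SimpleGraph.mem_neighborFinset _ _ _).mpr
          (hall c hcx), (SimpleGraph.mem_neighborFinset _ _ _).mpr hcb⟩
      have hdb : n / 2 + 1 ≤ (G.neighborFinset b).card :=
        le_trans hδ (G.minDegree_le_degree b)
      have := Finset.card_le_card hsub
      have := Finset.pred_card_le_card_erase (s := G.neighborFinset b) (a := x)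
      omega
    · push_neg at hall
      obtain ⟨b, hb, hnadj⟩ := hall
      refine ⟨b, hb, ?_⟩
      set Nx := G.neighborFinset x
      set Nb := G.neighborFinset b
      have hdx : n / 2 + 1 ≤ Nx.card := le_trans hδ (G.minDegree_le_degree x)
      have hdb : n / 2 + 1 ≤ Nb.card := le_trans hδ (G.minDegree_le_degree b)
      have hunion : (Nx ∪ Nb).card ≤ n - 2 := by
        have hsub : Nx ∪ Nb ⊆ Finset.univ \ {x, b} := by
          intro v hv
          simp only [Finset.mem_union, SimpleGraph.mem_neighborFinset, Nx, Nb] at hv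
          simp only [Finset.mem_sdiff, Finset.mem_univ, Finset.mem_insert,
            Finset.mem_singleton, true_and]
          rintro (rfl | rfl)
          · rcases hv with h | h
            · exact G.irrefl h
            · exact hnadj h.symm
          · rcases hv with h | h
            · exact hnadj h
            · exact G.irrefl h
        calc (Nx ∪ Nb).card ≤ (Finset.univ \ ({x, b} : Finset V)).card :=
              Finset.card_le_card hsub
          _ = n - 2 := by
              rw [Finset.card_sdiff_of_subset (Finset.subset_univ _), Finset.card_univ, hn,
                Finset.card_insert_of_notMem (by simpa using hb.symm),
                Finset.card_singleton]
      have hkey := (Finset.card_union_add_card_inter Nx Nb).symm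
      omega
  set S := G.neighborFinset x ∩ G.neighborFinset b with hSdef
  obtain ⟨T, hTsub, hT3⟩ := Finset.exists_subset_card_eq hS
  obtain ⟨c, d, e, hcd, hce, hde, hT⟩ := Finset.card_eq_three.mp hT3
  have hc := hTsub (hT ▸ (by simp : c ∈ ({c, d, e} : Finset V)))
  have hd := hTsub (hT ▸ (by simp : d ∈ ({c, d, e} : Finset V)))
  have he := hTsub (hT ▸ (by simp : e ∈ ({c, d, e} : Finset V)))
  simp only [hSdef, Finset.mem_inter, SimpleGraph.mem_neighborFinset] at hc hd he
  refine ⟨x, b, c, d, e, ?_, by simp, hc.1, hd.1, he.1, hc.2, hd.2, he.2⟩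
  have h1 : c ≠ x := hc.1.ne'
  have h2 : d ≠ x := hd.1.ne'
  have h3 : e ≠ x := he.1.ne'
  have h4 : c ≠ b := hc.2.ne'
  have h5 : d ≠ b := hd.2.ne'
  have h6 : e ≠ b := he.2.ne'
  rw [Finset.card_insert_of_notMem (by simp [hb.symm, h1.symm, h2.symm, h3.symm]),
    Finset.card_insert_of_notMem (by simp [h4.symm, h5.symm, h6.symm]),
    Finset.card_insert_of_notMem (by simp [hcd, hce]),
    Finset.card_insert_of_notMem (by simp [hde]), Finset.card_singleton]
end

section
/- For each r ≥ 3 and n ≥ (r-1)·2^{r-1} + 4, if G is a graph on n vertices with minimum degree δ(G) ≥ ⌊n/2⌋ + (r-3), then G contains a copy of the complete bipartite graph K_{r, r-1}, i.e. there exist disjoint vertex sets S of size r and T of size r-1 with every vertex of S adjacent to every vertex of T. -/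
open Finset

open scoped Classical

/-!
Kővári–Sós–Turán double counting. Count the pairs `(v, T)` with `T` an `(r-1)`-subset of the
neighbourhood of `v`: there are at least `n * choose δ (r-1)` of them. Without a copy of
`K_{r,r-1}` every `(r-1)`-set has at most `r - 1` common neighbours, so there are at most
`(r-1) * choose n (r-1)`. With `d = n/2`, the falling factorials satisfy
`(r-1) n^{(r-1)} ≤ (r-1) n (2d)^{r-2} < n (d-1) d^{r-2} ≤ n δ^{(r-1)}`, the middle step being
exactly `(r-1) 2^{r-2} + 2 ≤ d`.
-/

namespace SimpleGraph

variable {V : Type*} [Fintype V] (G : SimpleGraph V) [DecidableRel G.Adj]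

theorem card_mul_choose_minDegree_le_sum_choose_degree (t : ℕ) :
    Fintype.card V * G.minDegree.choose t ≤ ∑ v, (G.degree v).choose t := by
  rw [← smul_eq_mul, ← card_univ, ← sum_const]
  exact sum_le_sum fun v _ => Nat.choose_le_choose t (G.minDegree_le_degree v)

variable [DecidableEq V]

def commonNeighborFinset (T : Finset V) : Finset V :=
  {v | T ⊆ G.neighborFinset v}

theorem mem_commonNeighborFinset {T : Finset V} {v : V} :
    v ∈ G.commonNeighborFinset T ↔ ∀ t ∈ T, G.Adj v t := by
  simp [commonNeighborFinset, subset_iff]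

theorem sum_card_commonNeighborFinset_eq_sum_choose_degree (t : ℕ) :
    ∑ T ∈ powersetCard t univ, #(G.commonNeighborFinset T) = ∑ v, (G.degree v).choose t := by
  unfold commonNeighborFinset
  refine (sum_card_bipartiteAbove_eq_sum_card_bipartiteBelow
    (fun T v => T ⊆ G.neighborFinset v)).trans (sum_congr rfl fun v _ => ?_)
  rw [← card_neighborFinset_eq_degree, ← card_powersetCard]
  congr 1
  ext T
  simp [bipartiteBelow, mem_powersetCard, and_comm]

theorem exists_completeBipartite_of_mul_choose_lt_sum_choose_degree {s t : ℕ}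
    (h : s * (Fintype.card V).choose t < ∑ v, (G.degree v).choose t) :
    ∃ S T : Finset V, Disjoint S T ∧ #S = s + 1 ∧ #T = t ∧ ∀ x ∈ S, ∀ y ∈ T, G.Adj x y := by
  by_contra hfree
  have hsmall : ∀ T ∈ powersetCard t univ, #(G.commonNeighborFinset T) ≤ s := by
    intro T hT
    by_contra! hbig
    obtain ⟨S, hSsub, hScard⟩ := exists_subset_card_eq (Nat.succ_le_of_lt hbig)
    have hadj : ∀ x ∈ S, ∀ y ∈ T, G.Adj x y := fun x hx =>
      G.mem_commonNeighborFinset.1 (hSsub hx)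
    have hdisj : Disjoint S T :=
      Finset.disjoint_left.2 fun x hxS hxT => G.irrefl (hadj x hxS x hxT)
    exact hfree ⟨S, T, hdisj, hScard, (mem_powersetCard.1 hT).2, hadj⟩
  have hcount : ∑ v, (G.degree v).choose t ≤ s * (Fintype.card V).choose t :=
    calc ∑ v, (G.degree v).choose t
        = ∑ T ∈ powersetCard t univ, #(G.commonNeighborFinset T) :=
          (G.sum_card_commonNeighborFinset_eq_sum_choose_degree t).symm
      _ ≤ ∑ _T ∈ powersetCard t (univ : Finset V), s := sum_le_sum hsmall
      _ = s * (Fintype.card V).choose t := by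
          rw [sum_const, card_powersetCard, card_univ, smul_eq_mul, mul_comm]
  exact h.not_ge hcount

end SimpleGraph

theorem Nat.mul_choose_lt_mul_choose_of_le_half {k n δ : ℕ} (hd : (k + 1) * 2 ^ k + 2 ≤ n / 2)
    (hδ : n / 2 + k ≤ δ + 1) :
    (k + 1) * n.choose (k + 1) < n * δ.choose (k + 1) := by
  set d := n / 2
  have hn : 0 < n := by omega
  have upper : n.descFactorial (k + 1) ≤ n * (2 * d) ^ k := by
    obtain ⟨m, rfl⟩ : ∃ m, n = m + 1 := ⟨n - 1, by omega⟩
    rw [Nat.succ_descFactorial_succ]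
    exact Nat.mul_le_mul_left _
      ((Nat.descFactorial_le_pow m k).trans (Nat.pow_le_pow_left (by omega) k))
  have lower : (d - 1) * d ^ k ≤ δ.descFactorial (k + 1) := by
    rw [Nat.descFactorial_succ]
    exact Nat.mul_le_mul (by omega)
      ((Nat.pow_le_pow_left (by omega) k).trans (Nat.pow_sub_le_descFactorial δ k))
  have hdesc : (k + 1) * n.descFactorial (k + 1) < n * δ.descFactorial (k + 1) :=
    calc (k + 1) * n.descFactorial (k + 1)
        ≤ (k + 1) * (n * (2 * d) ^ k) := Nat.mul_le_mul_left _ upper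
      _ = n * ((k + 1) * 2 ^ k * d ^ k) := by rw [mul_pow]; ring
      _ < n * ((d - 1) * d ^ k) :=
          mul_lt_mul_of_pos_left (mul_lt_mul_of_pos_right (by omega) (pow_pos (by omega) k)) hn
      _ ≤ n * δ.descFactorial (k + 1) := Nat.mul_le_mul_left _ lower
  simp only [Nat.descFactorial_eq_factorial_mul_choose] at hdesc
  exact Nat.lt_of_mul_lt_mul_left (a := (k + 1).factorial) (by linarith)

theorem stmt_6 {V : Type*} [Fintype V] (G : SimpleGraph V) (r n : ℕ)
    (hr : 3 ≤ r) (hn : Fintype.card V = n) (hbig : (r - 1) * 2 ^ (r - 1) + 4 ≤ n)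
    (hδ : n / 2 + (r - 3) ≤ G.minDegree) :
    ∃ S T : Finset V, Disjoint S T ∧ S.card = r ∧ T.card = r - 1 ∧
      ∀ s ∈ S, ∀ t ∈ T, G.Adj s t := by
  obtain ⟨k, rfl⟩ : ∃ k, r = k + 2 := ⟨r - 2, by omega⟩
  subst hn
  have hhalf : (k + 1) * 2 ^ k + 2 ≤ Fintype.card V / 2 := by
    rw [Nat.le_div_iff_mul_le two_pos]
    calc ((k + 1) * 2 ^ k + 2) * 2 = (k + 2 - 1) * 2 ^ (k + 2 - 1) + 4 := by
          rw [show k + 2 - 1 = k + 1 from rfl, pow_succ]; ring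
      _ ≤ Fintype.card V := hbig
  have hchoose := Nat.mul_choose_lt_mul_choose_of_le_half hhalf (δ := G.minDegree) (by omega)
  exact G.exists_completeBipartite_of_mul_choose_lt_sum_choose_degree
    (hchoose.trans_le (G.card_mul_choose_minDegree_le_sum_choose_degree (k + 1)))
end

section
/- For any r ≥ 4, n ≥ 2r, and any graph G on n vertices with δ(G) ≥ ⌊n/2⌋ + 1, if A ⊆ V(G) satisfies |A| = ⌈n/2⌉ + r - 3 and ⟨A⟩_r = A, then the induced subgraph G[A^c] is a complete graph and every vertex of A^c has exactly r-1 neighbours in A. -/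
open Finset

open scoped Classical

theorem stmt_14 {V : Type*} [Fintype V] (G : SimpleGraph V) (r n : ℕ)
    (hr : 4 ≤ r) (hn : Fintype.card V = n) (h2r : 2 * r ≤ n)
    (hδ : n / 2 + 1 ≤ G.minDegree)
    (A : Finset V) (hcard : A.card = (n + 1) / 2 + (r - 3))
    (hclosed : bootClosure G r A = A) :
    (∀ x ∈ Aᶜ, ∀ y ∈ Aᶜ, x ≠ y → G.Adj x y) ∧
    (∀ x ∈ Aᶜ, nbrsIn G A x = r - 1) := by
  classical
  -- A is boot-closed
  have hA_closed : BootClosed G r A := by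
    intro v hv
    rw [← hclosed]
    simp only [bootClosure, mem_filter, mem_univ, true_and]
    intro B hAB hB
    refine hB v (le_trans hv ?_)
    exact Finset.card_le_card (Finset.filter_subset_filter _ hAB)
  have hcompl : Aᶜ.card = n - A.card := by
    rw [Finset.card_compl, hn]
  -- key facts for each x ∈ Aᶜ
  have key : ∀ x ∈ Aᶜ, nbrsIn G A x = r - 1 ∧ nbrsIn G Aᶜ x = Aᶜ.card - 1 := by
    intro x hx
    have hxA : x ∉ A := Finset.mem_compl.mp hx
    have ha : nbrsIn G A x ≤ r - 1 := by
      by_contra h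
      exact hxA (hA_closed x (by omega))
    have hsub : Aᶜ.filter (fun u => G.Adj x u) ⊆ Aᶜ.erase x := by
      intro u hu
      rw [Finset.mem_filter] at hu
      exact Finset.mem_erase.mpr ⟨(G.ne_of_adj hu.2).symm, hu.1⟩
    have hb : nbrsIn G Aᶜ x ≤ Aᶜ.card - 1 := by
      have := Finset.card_le_card hsub
      rwa [Finset.card_erase_of_mem hx] at this
    have hsum : nbrsIn G A x + nbrsIn G Aᶜ x = G.degree x := by
      unfold nbrsIn
      rw [← Finset.card_union_of_disjoint
        (Finset.disjoint_filter_filter disjoint_compl_right),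
        ← Finset.filter_union, Finset.union_compl]
      congr 1
      ext u
      simp [SimpleGraph.mem_neighborFinset]
    have hdeg : n / 2 + 1 ≤ G.degree x := le_trans hδ (G.minDegree_le_degree x)
    have hAne : Aᶜ.Nonempty := ⟨x, hx⟩
    have hAc : 1 ≤ Aᶜ.card := Finset.card_pos.mpr hAne
    constructor <;> omega
  refine ⟨?_, fun x hx => (key x hx).1⟩
  intro x hx y hy hxy
  have hsub : Aᶜ.filter (fun u => G.Adj x u) ⊆ Aᶜ.erase x := by
    intro u hu
    rw [Finset.mem_filter] at hu
    exact Finset.mem_erase.mpr ⟨(G.ne_of_adj hu.2).symm, hu.1⟩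
  have heq : Aᶜ.filter (fun u => G.Adj x u) = Aᶜ.erase x := by
    apply Finset.eq_of_subset_of_card_le hsub
    rw [Finset.card_erase_of_mem hx]
    have := (key x hx).2
    unfold nbrsIn at this
    omega
  have : y ∈ Aᶜ.filter (fun u => G.Adj x u) := by
    rw [heq]
    exact Finset.mem_erase.mpr ⟨hxy.symm, hy⟩
  exact (Finset.mem_filter.mp this).2
end

section
/- Let G be a graph on n vertices and A ⊆ V(G) a set closed under r-neighbour bootstrap percolation with |A| = ⌈n/2⌉ + 1, where δ(G) ≥ ⌊n/2⌋ + (r-3) and r ≥ 4. Then the set A_r = {x ∈ A : x has at least r neighbours in A^c} satisfies |A_r| ≤ ((r-1)/r)(⌊n/2⌋ - 1). -/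
open Finset

open scoped Classical

theorem stmt_17 {V : Type*} [Fintype V] (G : SimpleGraph V) (r n : ℕ)
    (hr : 4 ≤ r) (hn : Fintype.card V = n)
    (hδ : n / 2 + (r - 3) ≤ G.minDegree)
    (A : Finset V) (hclosed : BootClosed G r A) (hcard : A.card = (n + 1) / 2 + 1) :
    ((A.filter (fun x => r ≤ nbrsIn G Aᶜ x)).card : ℚ) ≤
      (((r : ℚ) - 1) / r) * (((n / 2 : ℕ) : ℚ) - 1) := by
  classical
  have hAle : A.card ≤ n := hn ▸ A.card_le_univ
  have hn2 : 2 ≤ n := by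
    by_contra h
    interval_cases n <;> omega
  have hcompl : Aᶜ.card = n / 2 - 1 := by
    have := Finset.card_compl A
    rw [hn, hcard] at this
    omega
  set Ar := A.filter (fun x => r ≤ nbrsIn G Aᶜ x) with hAr
  -- key nat inequality
  have hkey : r * Ar.card ≤ (r - 1) * (n / 2 - 1) := by
    have h1 : r * Ar.card ≤ ∑ x ∈ A, nbrsIn G Aᶜ x := by
      calc r * Ar.card = ∑ _x ∈ Ar, r := by rw [Finset.sum_const, smul_eq_mul, mul_comm]
        _ ≤ ∑ x ∈ Ar, nbrsIn G Aᶜ x := Finset.sum_le_sum (fun x hx => (Finset.mem_filter.1 hx).2)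
        _ ≤ ∑ x ∈ A, nbrsIn G Aᶜ x :=
            Finset.sum_le_sum_of_subset (Finset.filter_subset _ _)
    have h2 : ∑ x ∈ A, nbrsIn G Aᶜ x = ∑ v ∈ Aᶜ, nbrsIn G A v := by
      unfold nbrsIn
      simp only [Finset.card_filter]
      rw [Finset.sum_comm]
      congr 1
      ext v
      congr 1
      ext x
      simp [G.adj_comm]
    have h3 : ∑ v ∈ Aᶜ, nbrsIn G A v ≤ (r - 1) * (n / 2 - 1) := by
      rw [← hcompl]
      calc ∑ v ∈ Aᶜ, nbrsIn G A v ≤ ∑ _v ∈ Aᶜ, (r - 1) := by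
            refine Finset.sum_le_sum fun v hv => ?_
            have hvA : v ∉ A := Finset.mem_compl.1 hv
            have := mt (hclosed v) hvA
            omega
        _ = (r - 1) * Aᶜ.card := by rw [Finset.sum_const, smul_eq_mul, mul_comm]
    omega
  -- convert to ℚ
  have hr0 : (0 : ℚ) < r := by positivity
  rw [div_mul_eq_mul_div, le_div_iff₀ hr0]
  have hn2' : 1 ≤ n / 2 := by omega
  have hcast : ((n / 2 : ℕ) : ℚ) - 1 = ((n / 2 - 1 : ℕ) : ℚ) := by
    push_cast [hn2']; ring
  rw [hcast]
  have : ((r * Ar.card : ℕ) : ℚ) ≤ (((r - 1) * (n / 2 - 1) : ℕ) : ℚ) := by exact_mod_cast hkey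
  rw [Nat.cast_mul, Nat.cast_mul, Nat.cast_pred (by omega : 0 < r)] at this
  rw [Nat.sub_one] at this ⊢
  linarith
end

section
/- In the graph G on n vertices (n even, n ≥ 4) consisting of two cliques A and B of size n/2 joined by a perfect matching, any initially infected set consisting of all of B together with at most one vertex of A fails to percolate in 3-neighbour bootstrap percolation: its 3-neighbour bootstrap closure contains no vertex of A other than the one initially infected. -/
/-!
The initial set is already closed: a vertex of `A` outside it has at most one infected
neighbour in `A` and exactly one in `B`, its partner, so fewer than three.
-/

open Finset

open scoped Classical

/-- Two cliques of size `n/2` (the lower and upper halves of `Fin n`) joined by the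
perfect matching `i ↔ i + n/2`. -/
def matchGraph (n : ℕ) : SimpleGraph (Fin n) where
  Adj i j := i ≠ j ∧ (((i : ℕ) < n / 2 ↔ (j : ℕ) < n / 2) ∨
    (j : ℕ) = (i : ℕ) + n / 2 ∨ (i : ℕ) = (j : ℕ) + n / 2)
  symm := by
    constructor
    intro i j h
    exact ⟨h.1.symm, by tauto⟩
  loopless := by
    constructor
    intro i h
    exact h.1 rfl

section Bootstrap

variable {V : Type*} {G : SimpleGraph V} {r : ℕ} {A B : Finset V}

theorem bootClosed_of_nbrsIn_lt (h : ∀ v ∉ A, nbrsIn G A v < r) : BootClosed G r A :=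
  fun v hv => by_contra fun hvA => (h v hvA).not_ge hv

theorem bootClosure_subset_of_bootClosed [Fintype V] (hAB : A ⊆ B) (hB : BootClosed G r B) :
    bootClosure G r A ⊆ B :=
  fun _ hv => (mem_filter.mp hv).2 B hAB hB

end Bootstrap

theorem matchGraph_adj_eq_add_of_lt_of_le {n : ℕ} {w u : Fin n} (hw : (w : ℕ) < n / 2)
    (hu : n / 2 ≤ (u : ℕ)) (h : (matchGraph n).Adj w u) : (u : ℕ) = w + n / 2 := by
  obtain ⟨-, h | h | h⟩ := h <;> omega

theorem nbrsIn_matchGraph_le {n : ℕ} (S : Finset (Fin n)) {w : Fin n} (hw : (w : ℕ) < n / 2) :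
    nbrsIn (matchGraph n) S w ≤ (S.filter fun i : Fin n => (i : ℕ) < n / 2).card + 1 := by
  have hwn : (w : ℕ) + n / 2 < n := by omega
  calc nbrsIn (matchGraph n) S w
      ≤ (insert ⟨w + n / 2, hwn⟩ (S.filter fun i : Fin n => (i : ℕ) < n / 2)).card := by
        refine card_le_card fun u hu => ?_
        obtain ⟨huS, hadj⟩ := mem_filter.mp hu
        by_cases hu2 : (u : ℕ) < n / 2
        · exact mem_insert_of_mem (mem_filter.mpr ⟨huS, hu2⟩)
        · exact mem_insert.mpr
            (Or.inl (Fin.ext (matchGraph_adj_eq_add_of_lt_of_le hw (not_lt.mp hu2) hadj)))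
    _ ≤ _ := card_insert_le _ _

theorem stmt_18_general (n : ℕ)
    (S : Finset (Fin n))
    (hB : ∀ i : Fin n, n / 2 ≤ (i : ℕ) → i ∈ S)
    (hA : (S.filter (fun i => (i : ℕ) < n / 2)).card ≤ 1) :
    ∀ v : Fin n, (v : ℕ) < n / 2 → v ∈ bootClosure (matchGraph n) 3 S → v ∈ S := by
  -- `hA` counts the images `(i : ℕ)` of the elements of `S`, through the `Finset` monad.
  rw [bind_pure_comp, fmap_def] at hA
  replace hA : (S.filter fun i : Fin n => (i : ℕ) < n / 2).card ≤ 1 := by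
    convert hA using 1
    convert (card_image_of_injective (S.filter fun i : Fin n => (i : ℕ) < n / 2)
      Fin.val_injective).symm using 2
    convert filter_image using 2
  have hclosed : BootClosed (matchGraph n) 3 S := bootClosed_of_nbrsIn_lt fun w hwS => by
    have hw : (w : ℕ) < n / 2 := by
      by_contra h
      exact hwS (hB w (not_lt.mp h))
    have := nbrsIn_matchGraph_le S hw
    omega
  exact fun _ _ hv => bootClosure_subset_of_bootClosed subset_rfl hclosed hv

theorem stmt_18 (n : ℕ) (hn : 4 ≤ n) (he : Even n)
    (S : Finset (Fin n))
    (hB : ∀ i : Fin n, n / 2 ≤ (i : ℕ) → i ∈ S)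
    (hA : (S.filter (fun i => (i : ℕ) < n / 2)).card ≤ 1) :
    ∀ v : Fin n, (v : ℕ) < n / 2 → v ∈ bootClosure (matchGraph n) 3 S → v ∈ S :=
  stmt_18_general n S hB hA
end
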